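/- arXiv:1103.2051 — 5 statements merged into one kernel-verified Lean document; each statement's English description precedes it below -/
import Mathlib

section
/- Let p ≥ 3, let ρ = (1 2 … p) ∈ S_p, and let m be an integer with 2 ≤ m ≤ p. Then there exists an involution σ ∈ S_p such that the permutation σρ has order exactly m. -/
namespace Stmt1Aux

open Equiv

/-- total number of points: `(Q+1)` rows of length `M+2`, plus `f` extras. -/
def P (Q M f : ℕ) : ℕ := (M+2) + f + Q*(M+1) + Q

abbrev B (Q M f : ℕ) := (Fin (Q+1) × Fin (M+2)) ⊕ Fin f

variable {Q M f : ℕ}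

lemma P_eq : P Q M f = (Q+1)*(M+2) + f := by unfold P; ring

lemma two_le_P : 2 ≤ P Q M f := by unfold P; omega

instance : NeZero (P Q M f) := ⟨by have := two_le_P (Q := Q) (M := M) (f := f); omega⟩

lemma sub_one_mul_add {a b : ℕ} (h : 1 ≤ a) : (a - 1) * b + b = a * b := by
  calc (a-1)*b + b = ((a-1)+1)*b := by ring
  _ = a * b := by rw [Nat.sub_add_cancel h]

/-- the model permutation of order `M+2`: rotate every row, fix extras. -/
def pi0 (Q M f : ℕ) : Equiv.Perm (B Q M f) :=
  Equiv.sumCongr (Equiv.prodCongr (Equiv.refl (Fin (Q+1))) (finRotate (M+2)))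
    (Equiv.refl (Fin f))

/-- the involution (a pairing) on `B`. -/
def sF (Q M f : ℕ) (hf : f ≤ M + 1) : B Q M f → B Q M f
  | .inl (i, j) =>
    if hj0 : j.val = 0 then
      (if hi : i.val + 1 ≤ Q then .inl (⟨i.val + 1, by omega⟩, ⟨1, by omega⟩)
        else .inl (i, j))
    else if hj1 : j.val = 1 then
      (if hi : 1 ≤ i.val then .inl (⟨i.val - 1, by have := i.isLt; omega⟩, ⟨0, by omega⟩)
        else if hf1 : 1 ≤ f then .inr ⟨0, hf1⟩ else .inl (i, j))
    else if hc : i.val = 0 ∧ j.val ≤ f then .inr ⟨j.val - 1, by have := j.isLt; omega⟩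
    else .inl (i, j)
  | .inr k => .inl (⟨0, by omega⟩, ⟨k.val + 1, by have := k.isLt; omega⟩)

section sFlem
variable (hf : f ≤ M + 1) (i : Fin (Q+1)) (j : Fin (M+2)) (k : Fin f)

lemma sF_col0 (hj : j.val = 0) (hi : i.val + 1 ≤ Q) :
    sF Q M f hf (.inl (i, j)) = .inl (⟨i.val + 1, by omega⟩, ⟨1, by omega⟩) := by
  simp only [sF, dif_pos hj, dif_pos hi]

lemma sF_col0' (hj : j.val = 0) (hi : ¬ i.val + 1 ≤ Q) :
    sF Q M f hf (.inl (i, j)) = .inl (i, j) := by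
  simp only [sF, dif_pos hj, dif_neg hi]

lemma sF_col1 (hj : j.val = 1) (hi : 1 ≤ i.val) :
    sF Q M f hf (.inl (i, j)) = .inl (⟨i.val - 1, by have := i.isLt; omega⟩, ⟨0, by omega⟩) := by
  simp only [sF, dif_neg (by omega : ¬ j.val = 0), dif_pos hj, dif_pos hi]

lemma sF_col1' (hj : j.val = 1) (hi : ¬ 1 ≤ i.val) (hf1 : 1 ≤ f) :
    sF Q M f hf (.inl (i, j)) = .inr ⟨0, hf1⟩ := by
  simp only [sF, dif_neg (by omega : ¬ j.val = 0), dif_pos hj, dif_neg hi, dif_pos hf1]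

lemma sF_col1'' (hj : j.val = 1) (hi : ¬ 1 ≤ i.val) (hf1 : ¬ 1 ≤ f) :
    sF Q M f hf (.inl (i, j)) = .inl (i, j) := by
  simp only [sF, dif_neg (by omega : ¬ j.val = 0), dif_pos hj, dif_neg hi, dif_neg hf1]

lemma sF_ex (hj0 : ¬ j.val = 0) (hj1 : ¬ j.val = 1) (hc : i.val = 0 ∧ j.val ≤ f) :
    sF Q M f hf (.inl (i, j)) = .inr ⟨j.val - 1, by have := j.isLt; omega⟩ := by
  simp only [sF, dif_neg hj0, dif_neg hj1, dif_pos hc]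

lemma sF_fix (hj0 : ¬ j.val = 0) (hj1 : ¬ j.val = 1) (hc : ¬ (i.val = 0 ∧ j.val ≤ f)) :
    sF Q M f hf (.inl (i, j)) = .inl (i, j) := by
  simp only [sF, dif_neg hj0, dif_neg hj1, dif_neg hc]

lemma sF_inr :
    sF Q M f hf (.inr k) = .inl (⟨0, by omega⟩, ⟨k.val + 1, by have := k.isLt; omega⟩) := by
  simp only [sF]

end sFlem

/-- the position function. -/
def EF (Q M f : ℕ) : B Q M f → ℕ
  | .inl (i, j) =>
    if i.val = 0 then (if j.val ≤ f then 2*j.val else j.val + f)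
    else if j.val = 0 then P Q M f - i.val
    else (M+2) + f + (i.val - 1)*(M+1) + (j.val - 1)
  | .inr k => 2*k.val + 1

section EFlem
variable (i : Fin (Q+1)) (j : Fin (M+2)) (k : Fin f)

lemma EF_row0 (hi : i.val = 0) (hjf : j.val ≤ f) : EF Q M f (.inl (i, j)) = 2*j.val := by
  simp only [EF, if_pos hi, if_pos hjf]

lemma EF_row0' (hi : i.val = 0) (hjf : ¬ j.val ≤ f) : EF Q M f (.inl (i, j)) = j.val + f := by
  simp only [EF, if_pos hi, if_neg hjf]

lemma EF_col0 (hi : ¬ i.val = 0) (hj : j.val = 0) :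
    EF Q M f (.inl (i, j)) = P Q M f - i.val := by
  simp only [EF, if_neg hi, if_pos hj]

lemma EF_mid (hi : ¬ i.val = 0) (hj : ¬ j.val = 0) :
    EF Q M f (.inl (i, j)) = (M+2) + f + (i.val - 1)*(M+1) + (j.val - 1) := by
  simp only [EF, if_neg hi, if_neg hj]

lemma EF_inr : EF Q M f (.inr k) = 2*k.val + 1 := rfl

end EFlem

lemma EF_lt (hf : f ≤ M+1) (y : B Q M f) : EF Q M f y < P Q M f := by
  have hP : P Q M f = (M+2) + f + Q*(M+1) + Q := rfl
  obtain (⟨i, j⟩ | k) := y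
  · have hi := i.isLt
    have hj := j.isLt
    by_cases h1 : i.val = 0
    · by_cases h2 : j.val ≤ f
      · rw [EF_row0 i j h1 h2]; omega
      · rw [EF_row0' i j h1 h2]; omega
    · by_cases h2 : j.val = 0
      · rw [EF_col0 i j h1 h2]; omega
      · rw [EF_mid i j h1 h2]
        have h3 : (i.val - 1) * (M+1) ≤ (Q - 1) * (M+1) :=
          Nat.mul_le_mul_right _ (by omega)
        have hb2 : (Q-1) * (M+1) + (M+1) = Q * (M+1) := sub_one_mul_add (by omega)
        generalize (i.val - 1) * (M+1) = a at h3 ⊢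
        generalize (Q - 1) * (M+1) = b at h3 hb2 ⊢
        omega
  · have hk := k.isLt
    rw [EF_inr]
    omega

/-- decoding function (to a `ℕ`-coded copy of `B`), used for injectivity. -/
def D (Q M f : ℕ) (n : ℕ) : (ℕ × ℕ) ⊕ ℕ :=
  if n < (M+2) + f then
    (if n < 2*f then (if n % 2 = 1 then .inr ((n-1)/2) else .inl (0, n/2))
      else .inl (0, n - f))
  else if n < (M+2) + f + Q*(M+1) then
    .inl ((n - ((M+2)+f)) / (M+1) + 1, (n - ((M+2)+f)) % (M+1) + 1)
  else .inl (P Q M f - n, 0)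

def code : B Q M f → (ℕ × ℕ) ⊕ ℕ
  | .inl (i, j) => .inl (i.val, j.val)
  | .inr k => .inr k.val

lemma D_EF (hf : f ≤ M+1) (y : B Q M f) : D Q M f (EF Q M f y) = code y := by
  have hP : P Q M f = (M+2) + f + Q*(M+1) + Q := rfl
  obtain (⟨i, j⟩ | k) := y
  · have hi := i.isLt
    have hj := j.isLt
    show D Q M f (EF Q M f (.inl (i, j))) = .inl (i.val, j.val)
    by_cases h1 : i.val = 0
    · by_cases h2 : j.val ≤ f
      · rw [EF_row0 i j h1 h2]
        rcases Nat.lt_or_ge j.val f with hjf | hjf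
        · unfold D
          rw [if_pos (by omega), if_pos (by omega), if_neg (by omega)]
          have e1 : 2 * j.val / 2 = j.val := by omega
          rw [e1, h1]
        · have hjf2 : j.val = f := by omega
          unfold D
          rw [if_pos (by omega), if_neg (by omega)]
          have e1 : 2 * j.val - f = j.val := by omega
          rw [e1, h1]
      · rw [EF_row0' i j h1 h2]
        unfold D
        rw [if_pos (by omega), if_neg (by omega)]
        have e1 : j.val + f - f = j.val := by omega
        rw [e1, h1]
    · by_cases h2 : j.val = 0
      · rw [EF_col0 i j h1 h2]
        unfold D
        rw [if_neg (by omega), if_neg (by omega)]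
        have e1 : P Q M f - (P Q M f - i.val) = i.val := by omega
        rw [e1, h2]
      · rw [EF_mid i j h1 h2]
        have h3 : (i.val - 1) * (M+1) ≤ (Q - 1) * (M+1) :=
          Nat.mul_le_mul_right _ (by omega)
        have hb2 : (Q-1) * (M+1) + (M+1) = Q * (M+1) := sub_one_mul_add (by omega)
        unfold D
        rw [if_neg (by
            generalize (i.val - 1) * (M+1) = a at h3 ⊢
            generalize (Q - 1) * (M+1) = b at h3 hb2 ⊢
            omega),
          if_pos (by
            generalize (i.val - 1) * (M+1) = a at h3 ⊢
            generalize (Q - 1) * (M+1) = b at h3 hb2 ⊢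
            omega)]
        have h5 : (M+2) + f + (i.val-1)*(M+1) + (j.val-1) - ((M+2)+f)
            = (M+1) * (i.val - 1) + (j.val - 1) := by
          rw [Nat.mul_comm]
          omega
        rw [h5, Nat.mul_add_div (by omega), Nat.mul_add_mod,
          Nat.div_eq_of_lt (by omega), Nat.mod_eq_of_lt (by omega)]
        have e1 : i.val - 1 + 1 = i.val := by omega
        have e2 : j.val - 1 + 1 = j.val := by omega
        rw [e1, e2]
  · have hk := k.isLt
    show D Q M f (EF Q M f (.inr k)) = .inr k.val
    rw [EF_inr]
    unfold D
    rw [if_pos (by omega), if_pos (by omega), if_pos (by omega)]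
    have e1 : (2 * k.val + 1 - 1) / 2 = k.val := by omega
    rw [e1]

lemma EF_injective (hf : f ≤ M+1) : Function.Injective (EF Q M f) := by
  intro a b hab
  have h : code a = code b := by rw [← D_EF hf a, ← D_EF hf b, hab]
  obtain (⟨i, j⟩ | k) := a <;> obtain (⟨i', j'⟩ | k') := b
  · simp only [code, Sum.inl.injEq, Prod.mk.injEq] at h
    exact congrArg Sum.inl (Prod.ext (Fin.ext h.1) (Fin.ext h.2))
  · simp [code] at h
  · simp [code] at h
  · simp only [code, Sum.inr.injEq] at h
    exact congrArg Sum.inr (Fin.ext h)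

/-- the bundled equivalence. -/
noncomputable def EE (Q M f : ℕ) (hf : f ≤ M+1) : B Q M f ≃ Fin (P Q M f) :=
  Equiv.ofBijective (fun y => ⟨EF Q M f y, EF_lt hf y⟩)
    (by
      rw [Fintype.bijective_iff_injective_and_card]
      constructor
      · intro a b hab
        exact EF_injective hf (congrArg Fin.val hab)
      · simp only [B, Fintype.card_sum, Fintype.card_prod, Fintype.card_fin, P_eq])

lemma EE_apply (hf : f ≤ M+1) (y : B Q M f) : ((EE Q M f hf) y : ℕ) = EF Q M f y := rfl

lemma finRotate_apply' {N : ℕ} [NeZero N] (x : Fin N) : finRotate N x = x + 1 := by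
  rcases N with _ | n
  · exact absurd rfl (NeZero.ne 0)
  · exact finRotate_succ_apply x

lemma val_add_one' {N : ℕ} [NeZero N] (x : Fin N) :
    ((x + 1 : Fin N) : ℕ) = (x.val + 1) % N := by
  rcases N with _ | n
  · exact absurd rfl (NeZero.ne 0)
  · rw [Fin.val_add, Fin.val_one']
    exact Nat.add_mod_mod _ _ _

lemma wrap_eq {X Y Pp : ℕ} (h : (Y + 1 < Pp ∧ X = Y + 1) ∨ (Y + 1 = Pp ∧ X = 0)) :
    X = (Y + 1) % Pp := by
  rcases h with ⟨h1, h2⟩ | ⟨h1, h2⟩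
  · rw [Nat.mod_eq_of_lt h1]; exact h2
  · rw [h1, Nat.mod_self]; exact h2

lemma sF_involutive (hf : f ≤ M+1) : Function.Involutive (sF Q M f hf) := by
  intro y
  obtain (⟨i, j⟩ | k) := y
  · have hi := i.isLt
    have hj := j.isLt
    by_cases hj0 : j.val = 0
    · by_cases hiQ : i.val + 1 ≤ Q
      · rw [sF_col0 hf i j hj0 hiQ, sF_col1 hf _ _ rfl (by simp only [Fin.val_mk]; omega)]
        exact congrArg Sum.inl (Prod.ext (Fin.ext (by simp only [Fin.val_mk]; omega))
          (Fin.ext (by simp only [Fin.val_mk]; omega)))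
      · rw [sF_col0' hf i j hj0 hiQ, sF_col0' hf i j hj0 hiQ]
    · by_cases hj1 : j.val = 1
      · by_cases hi1 : 1 ≤ i.val
        · rw [sF_col1 hf i j hj1 hi1,
            sF_col0 hf _ _ rfl (by simp only [Fin.val_mk]; omega)]
          exact congrArg Sum.inl (Prod.ext (Fin.ext (by simp only [Fin.val_mk]; omega))
            (Fin.ext (by simp only [Fin.val_mk]; omega)))
        · by_cases hf1 : 1 ≤ f
          · rw [sF_col1' hf i j hj1 hi1 hf1, sF_inr]
            exact congrArg Sum.inl (Prod.ext (Fin.ext (by simp only [Fin.val_mk]; omega))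
              (Fin.ext (by simp only [Fin.val_mk]; omega)))
          · rw [sF_col1'' hf i j hj1 hi1 hf1, sF_col1'' hf i j hj1 hi1 hf1]
      · by_cases hc : i.val = 0 ∧ j.val ≤ f
        · rw [sF_ex hf i j hj0 hj1 hc, sF_inr]
          exact congrArg Sum.inl (Prod.ext (Fin.ext (by simp only [Fin.val_mk]; omega))
            (Fin.ext (by simp only [Fin.val_mk]; omega)))
        · rw [sF_fix hf i j hj0 hj1 hc, sF_fix hf i j hj0 hj1 hc]
  · have hk := k.isLt
    rw [sF_inr]
    by_cases hk1 : k.val + 1 = 1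
    · rw [sF_col1' hf _ _ (by simp only [Fin.val_mk]; omega)
        (by simp only [Fin.val_mk]; omega) (by omega)]
      exact congrArg Sum.inr (Fin.ext (by simp only [Fin.val_mk]; omega))
    · rw [sF_ex hf _ _ (by simp only [Fin.val_mk]; omega) (by simp only [Fin.val_mk]; omega)
        ⟨rfl, by simp only [Fin.val_mk]; omega⟩]
      exact congrArg Sum.inr (Fin.ext (by simp only [Fin.val_mk]; omega))

/-- THE key intertwining identity. -/
lemma key (hf : f ≤ M+1) (y : B Q M f) :
    (EE Q M f hf) (sF Q M f hf (pi0 Q M f y)) = (EE Q M f hf) y + 1 := by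
  have hP : P Q M f = (M+2) + f + Q*(M+1) + Q := rfl
  have hP2 := two_le_P (Q := Q) (M := M) (f := f)
  apply Fin.ext
  rw [val_add_one', EE_apply, EE_apply]
  obtain (⟨i, j⟩ | k) := y
  · have hi := i.isLt
    have hj := j.isLt
    have hpi : pi0 Q M f (.inl (i, j)) = .inl (i, j + 1) := by
      simp [pi0, finRotate_apply']
    rw [hpi]
    have hj1val : ((j + 1 : Fin (M+2)) : ℕ) = (j.val + 1) % (M+2) := val_add_one' j
    rcases Nat.lt_or_ge j.val (M+1) with hjlt | hjtop
    · -- no wraparound in the row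
      have hj1 : ((j + 1 : Fin (M+2)) : ℕ) = j.val + 1 := by
        rw [hj1val]; exact Nat.mod_eq_of_lt (by omega)
      have hjmod : (j.val + 1) % (M+2) = j.val + 1 := Nat.mod_eq_of_lt (by omega)
      by_cases hj0 : j.val = 0
      · -- new col = 1
        by_cases hi1 : 1 ≤ i.val
        · -- sF sends (i,1) to (i-1, 0)
          rw [sF_col1 hf i _ (by omega) hi1, EF_col0 i j (by omega) hj0]
          rcases Nat.lt_or_ge 1 i.val with hi2 | hi2
          · rw [EF_col0 _ _ (by simp only [Fin.val_mk]; omega) rfl]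
            simp only [Fin.val_mk]
            apply wrap_eq; left; omega
          · rw [EF_row0 _ _ (by simp only [Fin.val_mk]; omega) (by simp only [Fin.val_mk]; omega)]
            simp only [Fin.val_mk]
            apply wrap_eq; right; omega
        · -- i = 0
          have hi0 : i.val = 0 := by omega
          rw [EF_row0 i j hi0 (by omega)]
          by_cases hf1 : 1 ≤ f
          · rw [sF_col1' hf i _ (by omega) hi1 hf1, EF_inr]
            simp only [Fin.val_mk]
            apply wrap_eq; left; omega
          · rw [sF_col1'' hf i _ (by omega) hi1 hf1, EF_row0' i _ hi0 (by omega)]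
            apply wrap_eq; left; omega
      · -- j ≥ 1, so new col ≥ 2
        by_cases hc : i.val = 0 ∧ j.val + 1 ≤ f
        · -- goes to extras
          rw [sF_ex hf i _ (by omega) (by omega) ⟨hc.1, by omega⟩, EF_inr,
            EF_row0 i j hc.1 (by omega)]
          simp only [Fin.val_mk, hj1]
          apply wrap_eq; left; omega
        · -- fixed by sF
          rw [sF_fix hf i _ (by omega) (by omega) (by rw [hj1]; omega)]
          by_cases hi0 : i.val = 0
          · rw [EF_row0' i _ hi0 (by omega)]
            by_cases hjf : j.val ≤ f
            · rw [EF_row0 i j hi0 hjf]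
              apply wrap_eq; left
              constructor
              · omega
              · rw [hj1]; omega
            · rw [EF_row0' i j hi0 hjf]
              apply wrap_eq; left
              constructor
              · omega
              · rw [hj1]; omega
          · rw [EF_mid i _ hi0 (by omega), EF_mid i j hi0 hj0, hj1]
            have h3 : (i.val - 1) * (M+1) ≤ (Q - 1) * (M+1) :=
              Nat.mul_le_mul_right _ (by omega)
            have hb2 : (Q-1) * (M+1) + (M+1) = Q * (M+1) := sub_one_mul_add (by omega)
            apply wrap_eq; left; omega
    · -- j = M+1, new col = 0
      have hjtop2 : j.val = M+1 := by omega
      have hj1 : ((j + 1 : Fin (M+2)) : ℕ) = 0 := by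
        rw [hj1val, show j.val + 1 = M + 2 from by omega, Nat.mod_self]
      have hjmod : (j.val + 1) % (M+2) = 0 := by
        rw [show j.val + 1 = M + 2 from by omega, Nat.mod_self]
      by_cases hiQ : i.val + 1 ≤ Q
      · -- sF sends (i,0) to (i+1,1)
        rw [sF_col0 hf i _ hj1 hiQ,
          EF_mid _ _ (by simp only [Fin.val_mk]; omega) (by simp only [Fin.val_mk]; omega)]
        simp only [Fin.val_mk, Nat.add_sub_cancel]
        by_cases hi0 : i.val = 0
        · have hz : i.val * (M+1) = 0 := by rw [hi0, Nat.zero_mul]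
          by_cases hjf : j.val ≤ f
          · rw [EF_row0 i j hi0 hjf]
            apply wrap_eq; left; omega
          · rw [EF_row0' i j hi0 hjf]
            apply wrap_eq; left; omega
        · rw [EF_mid i j hi0 (by omega)]
          have hb2 : (i.val - 1) * (M+1) + (M+1) = i.val * (M+1) := sub_one_mul_add (by omega)
          have h3 : i.val * (M+1) ≤ (Q-1) * (M+1) :=
            Nat.mul_le_mul_right _ (by omega)
          have hb3 : (Q-1) * (M+1) + (M+1) = Q * (M+1) := sub_one_mul_add (by omega)
          apply wrap_eq; left; omega
      · -- i = Q : fixed point of sF (or the wrap when Q = 0)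
        have hiQ2 : i.val = Q := by omega
        rw [sF_col0' hf i _ hj1 hiQ]
        by_cases hQ0 : Q = 0
        · have hq0 : Q * (M+1) = 0 := by rw [hQ0, Nat.zero_mul]
          have hi0 : i.val = 0 := by omega
          rw [EF_row0 i _ hi0 (by omega)]
          by_cases hjf : j.val ≤ f
          · rw [EF_row0 i j hi0 hjf]
            apply wrap_eq; right; omega
          · rw [EF_row0' i j hi0 hjf]
            apply wrap_eq; right; omega
        · rw [EF_col0 i _ (by omega) hj1, EF_mid i j (by omega) (by omega)]
          have hb2 : (i.val - 1) * (M+1) + (M+1) = Q * (M+1) := by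
            calc (i.val - 1) * (M+1) + (M+1) = i.val * (M+1) := sub_one_mul_add (by omega)
            _ = Q * (M+1) := by rw [hiQ2]
          apply wrap_eq; left; omega
  · -- extras
    have hk := k.isLt
    have hpi : pi0 Q M f (.inr k) = .inr k := by simp [pi0]
    rw [hpi, sF_inr, EF_row0 _ _ rfl (by simp only [Fin.val_mk]; omega), EF_inr]
    simp only [Fin.val_mk]
    apply wrap_eq; left; omega

lemma pi0_pow_inl (n : ℕ) (i : Fin (Q+1)) (j : Fin (M+2)) :
    ((pi0 Q M f) ^ n) (.inl (i, j)) = .inl (i, ((finRotate (M+2))^n) j) := by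
  induction n generalizing j with
  | zero => simp
  | succ n ih =>
    rw [pow_succ', Equiv.Perm.mul_apply, ih j, pow_succ', Equiv.Perm.mul_apply]
    simp [pi0]

lemma pi0_pow_inr (n : ℕ) (k : Fin f) :
    ((pi0 Q M f) ^ n) (.inr k) = .inr k := by
  induction n with
  | zero => simp
  | succ n ih =>
    rw [pow_succ', Equiv.Perm.mul_apply, ih]
    simp [pi0]

lemma orderOf_pi0 : orderOf (pi0 Q M f) = M + 2 := by
  have hr : orderOf (finRotate (M+2)) = M+2 := by
    rw [← Equiv.Perm.lcm_cycleType, cycleType_finRotate]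
    simp
  have hr2 : (finRotate (M+2)) ^ (M+2) = 1 := by
    have h := pow_orderOf_eq_one (finRotate (M+2))
    rwa [hr] at h
  apply Nat.dvd_antisymm
  · apply orderOf_dvd_of_pow_eq_one
    apply Equiv.ext
    intro y
    obtain (⟨i, j⟩ | k) := y
    · rw [pi0_pow_inl, hr2]
      simp
    · rw [pi0_pow_inr]
      simp
  · rw [← hr]
    apply orderOf_dvd_of_pow_eq_one
    have h := pow_orderOf_eq_one (pi0 Q M f)
    apply Equiv.ext
    intro j
    have h2 := congrArg (fun (g : Equiv.Perm (B Q M f)) => g (.inl (⟨0, by omega⟩, j))) h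
    simp only [pi0_pow_inl, Equiv.Perm.one_apply] at h2
    have h3 := Sum.inl.inj h2
    have h4 := congrArg Prod.snd h3
    simpa using h4

end Stmt1Aux

theorem stmt_1 (p m : ℕ) (hp : 3 ≤ p) (hm : 2 ≤ m) (hmp : m ≤ p) :
    ∃ σ : Equiv.Perm (Fin p), σ * σ = 1 ∧ orderOf (σ * finRotate p) = m := by
  obtain ⟨M, rfl⟩ : ∃ t, m = t + 2 := ⟨m - 2, by omega⟩
  obtain ⟨Q, f, hf, hp_eq⟩ :
      ∃ Q fv, fv ≤ M + 1 ∧ Stmt1Aux.P Q M fv = p := by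
    have hm0 : 0 < M + 2 := by omega
    have hdiv : 1 ≤ p / (M+2) := (Nat.one_le_div_iff hm0).mpr hmp
    refine ⟨p / (M+2) - 1, p % (M+2), by have := Nat.mod_lt p hm0; omega, ?_⟩
    rw [Stmt1Aux.P_eq]
    have h1 : (M+2) * (p / (M+2)) + p % (M+2) = p := Nat.div_add_mod p (M+2)
    have h2 : p / (M+2) - 1 + 1 = p / (M+2) := by omega
    calc (p / (M+2) - 1 + 1) * (M+2) + p % (M+2)
        = (p / (M+2)) * (M+2) + p % (M+2) := by rw [h2]
      _ = (M+2) * (p / (M+2)) + p % (M+2) := by ring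
      _ = p := h1
  subst hp_eq
  set E := Stmt1Aux.EE Q M f hf with hE
  set s : Equiv.Perm (Stmt1Aux.B Q M f) := (Stmt1Aux.sF_involutive hf).toPerm with hs
  have hs_apply : ∀ y, s y = Stmt1Aux.sF Q M f hf y := fun y => rfl
  have hmul : ∀ a b : Equiv.Perm (Stmt1Aux.B Q M f),
      E.permCongr (a * b) = E.permCongr a * E.permCongr b := by
    intro a b
    ext x
    simp [Equiv.permCongr_apply, Equiv.Perm.mul_apply]
  have hss : s * s = 1 := by
    ext y
    simp only [Equiv.Perm.mul_apply, Equiv.Perm.one_apply, hs_apply]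
    exact Stmt1Aux.sF_involutive hf y
  have hone : E.permCongr (1 : Equiv.Perm (Stmt1Aux.B Q M f)) = 1 := by
    ext x
    simp [Equiv.permCongr_apply]
  refine ⟨E.permCongr s, ?_, ?_⟩
  · rw [← hmul, hss, hone]
  · have hconj : E.permCongr (s * Stmt1Aux.pi0 Q M f) = finRotate (Stmt1Aux.P Q M f) := by
      apply Equiv.ext
      intro x
      obtain ⟨y, rfl⟩ := E.surjective x
      rw [Equiv.permCongr_apply, Equiv.symm_apply_apply, Equiv.Perm.mul_apply,
        hs_apply, Stmt1Aux.key hf, Stmt1Aux.finRotate_apply']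
    have hprod : E.permCongr s * finRotate (Stmt1Aux.P Q M f)
        = E.permCongr (Stmt1Aux.pi0 Q M f) := by
      rw [← hconj, ← hmul, ← mul_assoc, hss, one_mul]
    rw [hprod]
    have hinj : Function.Injective (fun a : Equiv.Perm (Stmt1Aux.B Q M f) => E.permCongr a) :=
      Equiv.injective E.permCongr
    have horder := orderOf_injective (MonoidHom.mk' (fun a => E.permCongr a) hmul) hinj
      (Stmt1Aux.pi0 Q M f)
    simpa [Stmt1Aux.orderOf_pi0] using horder
end

section
/- Let p ≥ 3 and q ≥ 2 be integers, and let ρ = (1 2 … p) ∈ S_p. There exists an involution σ ∈ S_p with (σρ)^q = 1 if and only if q has a divisor d with 1 < d ≤ p. -/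
set_option linter.unusedSectionVars false

/-! Auxiliary ℕ-level construction.

Context: `d = e+1` with `1 ≤ e`, `f + t = e`, `L = k*e`, `p = L + k + e + 1 + f`.
`sN` is the involution σ (as a function on `[0,p)`), and `iN c m` enumerates the
point at position `m` of the `c`-th `d`-cycle of `τ = σ ∘ (+1 mod p)`.
Fixed points of `τ` are `L + t + 2*j + 1` for `j < f`. -/

private def sN (p k a L e : ℕ) (x : ℕ) : ℕ :=
  if p - k ≤ x then (p - x) * e
  else if a < x then (if (x - a) % 2 = 1 then x + 1 else x - 1)
  else if 0 < x ∧ x ≤ L ∧ e ∣ x then p - x / e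
  else x

private def iN (p k L t e : ℕ) (c m : ℕ) : ℕ :=
  if c < k then (if m < e then c * e + m else p - 1 - c)
  else (if m ≤ t then L + m else L + 2 * m - t)

private lemma sN_top {p k a L e x : ℕ} (h : p - k ≤ x) :
    sN p k a L e x = (p - x) * e := by unfold sN; rw [if_pos h]

private lemma sN_mid {p k a L e x : ℕ} (h1 : ¬(p - k ≤ x)) (h2 : a < x) :
    sN p k a L e x = (if (x - a) % 2 = 1 then x + 1 else x - 1) := by
  unfold sN; rw [if_neg h1, if_pos h2]

private lemma sN_c1 {p k a L e x : ℕ} (h1 : ¬(p - k ≤ x)) (h2 : ¬(a < x))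
    (h3 : 0 < x ∧ x ≤ L ∧ e ∣ x) :
    sN p k a L e x = p - x / e := by
  unfold sN; rw [if_neg h1, if_neg h2, if_pos h3]

private lemma sN_id {p k a L e x : ℕ} (h1 : ¬(p - k ≤ x)) (h2 : ¬(a < x))
    (h3 : ¬(0 < x ∧ x ≤ L ∧ e ∣ x)) :
    sN p k a L e x = x := by
  unfold sN; rw [if_neg h1, if_neg h2, if_neg h3]

private lemma iN_bot {p k L t e c m : ℕ} (hc : c < k) (hm : m < e) :
    iN p k L t e c m = c * e + m := by unfold iN; rw [if_pos hc, if_pos hm]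

private lemma iN_rtop {p k L t e c m : ℕ} (hc : c < k) (hm : ¬(m < e)) :
    iN p k L t e c m = p - 1 - c := by unfold iN; rw [if_pos hc, if_neg hm]

private lemma iN_flo {p k L t e c m : ℕ} (hc : ¬(c < k)) (hm : m ≤ t) :
    iN p k L t e c m = L + m := by unfold iN; rw [if_neg hc, if_pos hm]

private lemma iN_fhi {p k L t e c m : ℕ} (hc : ¬(c < k)) (hm : ¬(m ≤ t)) :
    iN p k L t e c m = L + 2 * m - t := by unfold iN; rw [if_neg hc, if_neg hm]

section Construction

variable {p k f t e L : ℕ}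
variable (he : 1 ≤ e) (hft : f + t = e) (hL : L = k * e) (hp : p = L + k + e + 1 + f)

include he hft hL hp

private lemma sN_lt : ∀ x < p, sN p k (L + t) L e x < p := by
  intro x hx
  by_cases h1 : p - k ≤ x
  · rw [sN_top h1]
    have h2 : p - x ≤ k := by omega
    have h3 : (p - x) * e ≤ k * e := Nat.mul_le_mul_right e h2
    omega
  by_cases h2 : L + t < x
  · rw [sN_mid h1 h2]
    split <;> omega
  by_cases h3 : 0 < x ∧ x ≤ L ∧ e ∣ x
  · rw [sN_c1 h1 h2 h3]
    have : e ≤ x := Nat.le_of_dvd h3.1 h3.2.2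
    have : 1 ≤ x / e := (Nat.one_le_div_iff (by omega)).2 this
    omega
  · rw [sN_id h1 h2 h3]; exact hx

private lemma sN_invol : ∀ x < p, sN p k (L + t) L e (sN p k (L + t) L e x) = x := by
  intro x hx
  by_cases h1 : p - k ≤ x
  · rw [sN_top h1]
    have h2 : 1 ≤ p - x ∧ p - x ≤ k := by omega
    have h3 : (p - x) * e ≤ k * e := Nat.mul_le_mul_right e h2.2
    have h4 : 1 ≤ (p - x) * e := by
      have := Nat.mul_le_mul_right e h2.1
      omega
    rw [sN_c1 (by omega) (by omega) ⟨by omega, by omega, dvd_mul_left e (p - x)⟩]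
    rw [Nat.mul_div_cancel _ (by omega)]
    omega
  by_cases h2 : L + t < x
  · rw [sN_mid h1 h2]
    by_cases ho : (x - (L + t)) % 2 = 1
    · rw [if_pos ho, sN_mid (by omega) (by omega), if_neg (by omega)]
      omega
    · rw [if_neg ho, sN_mid (by omega) (by omega), if_pos (by omega)]
      omega
  by_cases h3 : 0 < x ∧ x ≤ L ∧ e ∣ x
  · obtain ⟨c, hc⟩ := h3.2.2
    have h0 := h3.1
    have hxL := h3.2.1
    rw [sN_c1 h1 h2 h3, hc, Nat.mul_div_cancel_left _ (by omega)]
    have hc1 : 1 ≤ c := by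
      rcases Nat.eq_zero_or_pos c with h | h
      · subst h; simp at hc; omega
      · omega
    have hck : c ≤ k := by
      by_contra hck
      have h5 : e * (k + 1) ≤ e * c := Nat.mul_le_mul_left e (by omega)
      have h6 : e * (k + 1) = k * e + e := by ring
      omega
    rw [sN_top (by omega)]
    have hpc : p - (p - c) = c := by omega
    rw [hpc]
    exact Nat.mul_comm c e
  · rw [sN_id h1 h2 h3, sN_id h1 h2 h3]

private lemma keyF : ∀ j < f,
    sN p k (L + t) L e ((L + t + 2 * j + 1 + 1) % p) = L + t + 2 * j + 1 := by
  intro j hj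
  have hlt : L + t + 2 * j + 2 < p := by omega
  rw [Nat.mod_eq_of_lt hlt, sN_mid (by omega) (by omega), if_neg (by omega)]
  omega

private lemma keyT : ∀ c ≤ k, ∀ m ≤ e,
    sN p k (L + t) L e ((iN p k L t e c m + 1) % p) =
      iN p k L t e c ((m + 1) % (e + 1)) := by
  intro c hck m hme
  by_cases hc : c < k
  · have hce : c * e + e ≤ k * e := by
      have h5 : (c + 1) * e ≤ k * e := Nat.mul_le_mul_right e hc
      have h6 : (c + 1) * e = c * e + e := by ring
      omega
    rcases Nat.lt_or_ge m e with hm | hm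
    · -- m < e : bottom of a ring
      rw [iN_bot hc hm, Nat.mod_eq_of_lt (show c * e + m + 1 < p by omega),
        Nat.mod_eq_of_lt (show m + 1 < e + 1 by omega)]
      rcases Nat.lt_or_ge (m + 1) e with hm1 | hm1
      · -- still inside the bottom run
        rw [iN_bot hc hm1]
        have hnd : ¬ (e ∣ c * e + m + 1) := by
          intro hdvd
          have h1 : e ∣ c * e := dvd_mul_left e c
          have h2 : e ∣ m + 1 := by
            have := (Nat.dvd_add_right h1).mp (by rwa [Nat.add_assoc] at hdvd)
            exact this
          have := Nat.le_of_dvd (by omega) h2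
          omega
        rw [sN_id (by omega) (by omega) (by intro h; exact hnd h.2.2)]
        omega
      · -- m + 1 = e : jump to the top point
        have hmeq : m + 1 = e := by omega
        rw [iN_rtop hc (by omega)]
        have hvd : e ∣ c * e + m + 1 := ⟨c + 1, by
          have h6 : e * (c + 1) = c * e + e := by ring
          omega⟩
        rw [sN_c1 (by omega) (by omega) ⟨by omega, by omega, hvd⟩]
        have h7 : c * e + m + 1 = e * (c + 1) := by
          have h6 : e * (c + 1) = c * e + e := by ring
          omega
        rw [h7, Nat.mul_div_cancel_left _ (by omega)]
        omega
    · -- m = e : top point of a ring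
      rw [iN_rtop hc (by omega)]
      have hmeq : m = e := by omega
      have hmm : (m + 1) % (e + 1) = 0 := by rw [hmeq]; exact Nat.mod_self (e + 1)
      rw [hmm, iN_bot hc (by omega)]
      rcases Nat.eq_zero_or_pos c with hc0 | hc0
      · subst hc0
        have : (p - 1 - 0 + 1) % p = 0 := by
          have : p - 1 - 0 + 1 = p := by omega
          rw [this, Nat.mod_self]
        rw [this, sN_id (by omega) (by omega) (by intro h; omega)]
        simp
      · have : p - 1 - c + 1 = p - c := by omega
        rw [this, Nat.mod_eq_of_lt (by omega), sN_top (by omega)]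
        have : p - (p - c) = c := by omega
        rw [this]
        omega
  · -- c = k : the final gadget
    have hceq : c = k := by omega
    rcases Nat.lt_or_ge m e with hm | hm
    · rw [Nat.mod_eq_of_lt (show m + 1 < e + 1 by omega)]
      rcases Nat.lt_or_ge m t with hmt | hmt
      · -- unit-step region
        rw [iN_flo hc (by omega), iN_flo hc (by omega),
          Nat.mod_eq_of_lt (show L + m + 1 < p by omega)]
        rw [sN_id (by omega) (by omega) (by intro h; omega)]
        omega
      · rcases Nat.eq_or_lt_of_le hmt with hmeq | hmt'
        · -- m = t < e : first double step
          rw [iN_flo hc (by omega), iN_fhi hc (by omega),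
            Nat.mod_eq_of_lt (show L + m + 1 < p by omega)]
          rw [sN_mid (by omega) (by omega), if_pos (by omega)]
          omega
        · -- t < m, m+1 ≤ e : double-step region
          rw [iN_fhi hc (by omega), iN_fhi hc (by omega)]
          have h1 : L + 2 * m - t + 1 < p := by omega
          rw [Nat.mod_eq_of_lt h1]
          rw [sN_mid (by omega) (by omega), if_pos (by omega)]
          omega
    · -- m = e : last point of the final cycle, wraps to L
      have hmeq : m = e := by omega
      have hmm : (m + 1) % (e + 1) = 0 := by rw [hmeq]; exact Nat.mod_self (e + 1)
      have hiv : iN p k L t e c m = L + e + f := by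
        by_cases hte : m ≤ t
        · rw [iN_flo hc hte]; omega
        · rw [iN_fhi hc hte]; omega
      rw [hiv, hmm, iN_flo hc (Nat.zero_le t)]
      rcases Nat.eq_zero_or_pos k with hk0 | hk0
      · have : (L + e + f + 1) % p = 0 := by
          have : L + e + f + 1 = p := by omega
          rw [this, Nat.mod_self]
        rw [this, sN_id (by omega) (by omega) (by intro h; omega), hL, hk0]
        simp
      · rw [Nat.mod_eq_of_lt (show L + e + f + 1 < p by omega)]
        rw [sN_top (by omega)]
        have h1 : p - (L + e + f + 1) = k := by omega
        rw [h1]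
        omega

private lemma coverN : ∀ n < p,
    (∃ c ≤ k, ∃ m ≤ e, iN p k L t e c m = n) ∨ (∃ j < f, L + t + 2 * j + 1 = n) := by
  intro n hn
  rcases Nat.lt_or_ge n L with h1 | h1
  · -- bottom region
    left
    have he' : 0 < e := he
    have hdk : n / e < k := by
      by_contra hc
      push_neg at hc
      have h3 : k * e ≤ n / e * e := Nat.mul_le_mul_right e hc
      have h2 := Nat.div_mul_le_self n e
      omega
    have hmd := Nat.mod_lt n he'
    refine ⟨n / e, by omega, n % e, by omega, ?_⟩
    rw [iN_bot hdk hmd, Nat.mul_comm, Nat.div_add_mod]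
  rcases Nat.lt_or_ge (L + t) n with h2 | h2
  swap
  · -- plateau region L ≤ n ≤ L + t
    left
    refine ⟨k, le_refl k, n - L, by omega, ?_⟩
    rw [iN_flo (by omega) (by omega)]
    omega
  rcases Nat.lt_or_ge n (p - k) with h3 | h3
  · -- alternating region
    by_cases hpar : (n - (L + t)) % 2 = 1
    · right
      exact ⟨(n - (L + t)) / 2, by omega, by omega⟩
    · left
      refine ⟨k, le_refl k, t + (n - (L + t)) / 2, by omega, ?_⟩
      rw [iN_fhi (by omega) (by omega)]
      omega
  · -- top region
    left
    refine ⟨p - 1 - n, by omega, e, le_refl e, ?_⟩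
    rw [iN_rtop (by omega) (by omega)]
    omega

private lemma iterN : ∀ c ≤ k, ∀ m ≤ e, ∀ j,
    (fun n => sN p k (L + t) L e ((n + 1) % p))^[j] (iN p k L t e c m) =
      iN p k L t e c ((m + j) % (e + 1)) := by
  intro c hc m hm j
  induction j generalizing m with
  | zero => simp [Nat.mod_eq_of_lt (show m < e + 1 by omega)]
  | succ j ih =>
    rw [Function.iterate_succ_apply]
    have h1 : sN p k (L + t) L e ((iN p k L t e c m + 1) % p) =
        iN p k L t e c ((m + 1) % (e + 1)) := keyT he hft hL hp c hc m hm
    have h8 := Nat.mod_lt (m + 1) (show 0 < e + 1 by omega)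
    rw [h1, ih ((m + 1) % (e + 1)) (by omega)]
    congr 1
    rw [show m + (j + 1) = (m + 1) + j by ring, Nat.mod_add_mod]

end Construction

private lemma construction (P d : ℕ) (hd : 2 ≤ d) (hdp : d ≤ P + 1) :
    ∃ σ : Equiv.Perm (Fin (P + 1)), σ * σ = 1 ∧ (σ * finRotate (P + 1)) ^ d = 1 := by
  obtain ⟨e, rfl⟩ : ∃ e, d = e + 1 := ⟨d - 1, by omega⟩
  have he : 1 ≤ e := by omega
  obtain ⟨k, f, hf1, hkf⟩ : ∃ k f, f < e + 1 ∧ P + 1 - (e + 1) = (e + 1) * k + f :=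
    ⟨(P + 1 - (e + 1)) / (e + 1), (P + 1 - (e + 1)) % (e + 1),
      Nat.mod_lt _ (by omega), (Nat.div_add_mod _ _).symm⟩
  set p := P + 1 with hPp
  set t := e - f with ht
  set L := k * e with hLdef
  have hL : L = k * e := hLdef
  have hp : p = L + k + e + 1 + f := by
    have h2 : (e + 1) * k = k * e + k := by ring
    omega
  have hft : f + t = e := by omega
  have hSlt := sN_lt he hft hL hp
  have hSinv := sN_invol he hft hL hp
  let σ : Equiv.Perm (Fin p) :=
    { toFun := fun i => ⟨sN p k (L + t) L e i.1, hSlt i.1 i.2⟩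
      invFun := fun i => ⟨sN p k (L + t) L e i.1, hSlt i.1 i.2⟩
      left_inv := fun i => Fin.ext (hSinv i.1 i.2)
      right_inv := fun i => Fin.ext (hSinv i.1 i.2) }
  refine ⟨σ, ?_, ?_⟩
  · ext i
    exact hSinv i.1 i.2
  · have htv : ∀ i : Fin p, ((σ * finRotate p) i).1 =
        (fun n => sN p k (L + t) L e ((n + 1) % p)) i.1 := by
      intro i
      have h1 : (σ * finRotate p) i = σ ((finRotate (P + 1)) i) := rfl
      rw [h1, finRotate_succ_apply]
      show sN p k (L + t) L e ((i + 1 : Fin p).1) = _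
      have h2 : ((i + 1 : Fin p)).1 = (i.1 + 1) % p := by
        rw [Fin.val_add, Fin.val_one', Nat.mod_eq_of_lt (show 1 < p by omega)]
      rw [h2]
    have hT : ∀ n (i : Fin p), (((σ * finRotate p) ^ n) i).1 =
        (fun n => sN p k (L + t) L e ((n + 1) % p))^[n] i.1 := by
      intro n
      induction n with
      | zero => intro i; rfl
      | succ n ih =>
        intro i
        rw [pow_succ, Equiv.Perm.mul_apply, Function.iterate_succ_apply,
          ih ((σ * finRotate p) i), htv i]
    have hfix : ∀ n < p,
        (fun n => sN p k (L + t) L e ((n + 1) % p))^[e + 1] n = n := by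
      intro n hn
      rcases coverN he hft hL hp n hn with ⟨c, hc, m, hm, rfl⟩ | ⟨j, hj, rfl⟩
      · rw [iterN he hft hL hp c hc m hm (e + 1)]
        congr 1
        rw [Nat.add_mod_right, Nat.mod_eq_of_lt (by omega)]
      · exact Function.iterate_fixed (f := fun n => sN p k (L + t) L e ((n + 1) % p))
          (x := L + t + 2 * j + 1) (keyF he hft hL hp j hj) (e + 1)
    ext i
    have h3 := hT (e + 1) i
    have h4 : ((1 : Equiv.Perm (Fin p)) i).1 = i.1 := rfl
    rw [h4, h3, hfix i.1 i.2]

theorem stmt_2 (p q : ℕ) (hp : 3 ≤ p) (hq : 2 ≤ q) :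
    (∃ σ : Equiv.Perm (Fin p), σ * σ = 1 ∧ (σ * finRotate p) ^ q = 1) ↔
      ∃ d : ℕ, d ∣ q ∧ 1 < d ∧ d ≤ p := by
  constructor
  · rintro ⟨σ, hσ, hpow⟩
    have hτne : σ * finRotate p ≠ 1 := by
      intro h
      have hσinv : σ⁻¹ = σ := inv_eq_of_mul_eq_one_right hσ
      have hρσ : finRotate p = σ := by
        calc finRotate p = σ⁻¹ * (σ * finRotate p) := by group
          _ = σ⁻¹ * 1 := by rw [h]
          _ = σ := by rw [mul_one, hσinv]
      have h2 : finRotate p * finRotate p = 1 := by rw [hρσ]; exact hσ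
      have hord2 : orderOf (finRotate p) = p := by
        rw [← Equiv.Perm.lcm_cycleType, cycleType_finRotate_of_le (show 2 ≤ p by omega)]
        simp [Multiset.lcm_singleton]
      have h6 : orderOf (finRotate p) ∣ 2 :=
        orderOf_dvd_of_pow_eq_one (by rw [pow_two]; exact h2)
      rw [hord2] at h6
      have := Nat.le_of_dvd (by norm_num) h6
      omega
    have hord := orderOf_dvd_of_pow_eq_one hpow
    have h1 : orderOf (σ * finRotate p) ≠ 1 := by
      simpa [orderOf_eq_one_iff] using hτne
    refine ⟨(orderOf (σ * finRotate p)).minFac, dvd_trans (Nat.minFac_dvd _) hord,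
      (Nat.minFac_prime h1).one_lt, ?_⟩
    have hcard : orderOf (σ * finRotate p) ∣ Nat.factorial p := by
      have h2 := orderOf_dvd_card (x := σ * finRotate p)
      rwa [Fintype.card_perm, Fintype.card_fin] at h2
    exact (Nat.Prime.dvd_factorial (Nat.minFac_prime h1)).1
      (dvd_trans (Nat.minFac_dvd _) hcard)
  · rintro ⟨d, hdq, hd1, hdp⟩
    obtain ⟨P, rfl⟩ : ∃ P, p = P + 1 := ⟨p - 1, by omega⟩
    obtain ⟨σ, hσ, hpow⟩ := construction P d (by omega) (by omega)
    obtain ⟨m, rfl⟩ := hdq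
    exact ⟨σ, hσ, by rw [pow_mul, hpow, one_pow]⟩
end

section
/- Let p ≥ 3 and q ≥ 2 be integers, and let ρ = (1 2 … p) ∈ S_p. There exists an involution σ ∈ S_p with (σρ)^q = 1 if and only if q has a prime divisor less than or equal to p. -/
/-!
If `σ` is an involution with `(σρ)^q = 1`, then `σρ ≠ 1` because `ρ` is not an involution, so the
order of `σρ` is a nontrivial divisor of both `q` and `|S_p| = p!`; its least prime factor divides
`q` and is at most `p`.

Conversely, for a prime `d ≤ p` it suffices to write the `p`-cycle as `σ τ` with `σ² = 1` and
`τ^d = 1`. Two identities do this. First, `(x y u₁ … uₘ) = (x y) (y u₁ … uₘ)`: splitting off an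
adjacent transposition shortens the cycle by one, which handles lengths `d ≤ n < 2d` while `σ` keeps
a fixed point. Second, `(a u b v) = (a b) (a u) (b v)`: a long cycle is glued from a shorter
one and a `d`-cycle, along a transposition between fixed points of the two factorizations.
-/

open Equiv List

variable {α : Type*}

theorem Equiv.Perm.disjoint_of_forall_notMem {f g : Perm α} {l l' : List α}
    (hf : ∀ x ∉ l, f x = x) (hg : ∀ x ∉ l', g x = x) (h : ∀ a ∈ l, ∀ b ∈ l', a ≠ b) :
    f.Disjoint g := by
  intro x
  by_cases hx : x ∈ l
  · exact .inr (hg x fun hx' => h x hx x hx' rfl)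
  · exact .inl (hf x hx)

theorem List.exists_eq_append_of_le_length {l : List α} {k : ℕ} (h : k ≤ l.length) :
    ∃ P Q, l = P ++ Q ∧ P.length = k :=
  ⟨l.take k, l.drop k, (take_append_drop k l).symm, length_take_of_le h⟩

variable [DecidableEq α]

theorem List.formPerm_cons_append_cons (a b : α) (u v : List α)
    (h : (a :: u ++ b :: v).Nodup) :
    (a :: u ++ b :: v).formPerm = Equiv.swap a b * (a :: u).formPerm * (b :: v).formPerm := by
  induction u generalizing a with
  | nil => simp [formPerm_cons_cons]
  | cons c u ih =>
    have hc : (c :: u ++ b :: v).Nodup := h.of_cons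
    have hab : b ≠ a := by rintro rfl; simp at h
    have hcb : b ≠ c := by rintro rfl; simp at hc
    have hswap : Equiv.swap a c * Equiv.swap c b = Equiv.swap a b * Equiv.swap a c := by
      rw [mul_swap_eq_swap_mul, swap_apply_right, swap_apply_of_ne_of_ne hab hcb]
    rw [cons_append, cons_append, formPerm_cons_cons a c, ← cons_append, ih c hc,
      formPerm_cons_cons a c u, ← mul_assoc, ← mul_assoc, hswap, mul_assoc (Equiv.swap a b)]

/-- The cofactor `τ := σ * l.formPerm` satisfies `l.formPerm = σ * τ`, as `σ⁻¹ = σ`. -/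
structure IsInvolutiveFactor (d : ℕ) (l : List α) (σ : Perm α) : Prop where
  mul_self : σ * σ = 1
  pow_mul_formPerm : (σ * l.formPerm) ^ d = 1
  apply_of_notMem : ∀ x ∉ l, σ x = x

namespace IsInvolutiveFactor

variable {d : ℕ} {l l' : List α} {σ : Perm α}

theorem one (hl : l.Nodup) : IsInvolutiveFactor l.length l 1 :=
  ⟨one_mul 1, by rw [one_mul]; exact formPerm_pow_length_eq_one_of_nodup l hl, fun _ _ => rfl⟩

theorem singleton (d : ℕ) (a : α) : IsInvolutiveFactor d [a] 1 :=
  ⟨one_mul 1, by rw [formPerm_singleton, one_mul, one_pow], fun _ _ => rfl⟩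

theorem of_isRotated (h : IsInvolutiveFactor d l σ) (hl : l.Nodup) (hr : l ~r l') :
    IsInvolutiveFactor d l' σ :=
  ⟨h.mul_self, formPerm_eq_of_isRotated hl hr ▸ h.pow_mul_formPerm,
    fun x hx => h.apply_of_notMem x (hr.mem_iff.not.mpr hx)⟩

theorem mul_formPerm_apply_of_notMem (h : IsInvolutiveFactor d l σ) {x : α} (hx : x ∉ l) :
    (σ * l.formPerm) x = x := by
  rw [Perm.mul_apply, formPerm_apply_of_notMem hx, h.apply_of_notMem x hx]

/-- The factors on the two pieces have disjoint supports, and `σ₁ * σ₂` fixes `a` and `b`, hence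
commutes with `swap a b`. -/
theorem cons_append_cons {a b : α} {u v : List α} {σ₁ σ₂ : Perm α}
    (h₁ : IsInvolutiveFactor d (a :: u) σ₁) (h₂ : IsInvolutiveFactor d (b :: v) σ₂)
    (ha : σ₁ a = a) (hb : σ₂ b = b) (hl : (a :: u ++ b :: v).Nodup) :
    IsInvolutiveFactor d (a :: u ++ b :: v) (Equiv.swap a b * σ₁ * σ₂) := by
  have hdisj : ∀ x ∈ a :: u, ∀ y ∈ b :: v, x ≠ y := (nodup_append.mp hl).2.2
  have hσ : Commute σ₁ σ₂ :=
    (Perm.disjoint_of_forall_notMem h₁.apply_of_notMem h₂.apply_of_notMem hdisj).commute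
  have hσc : Commute σ₂ (a :: u).formPerm :=
    (Perm.disjoint_of_forall_notMem h₂.apply_of_notMem (fun x => formPerm_apply_of_notMem)
      fun x hx y hy => (hdisj y hy x hx).symm).commute
  have hτ : Commute (σ₁ * (a :: u).formPerm) (σ₂ * (b :: v).formPerm) :=
    (Perm.disjoint_of_forall_notMem (fun x => h₁.mul_formPerm_apply_of_notMem)
      (fun x => h₂.mul_formPerm_apply_of_notMem) hdisj).commute
  have hswap : Commute (Equiv.swap a b) (σ₁ * σ₂) := by
    have ha' : σ₂ a = a := h₂.apply_of_notMem a fun h => hdisj a (mem_cons_self) a h rfl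
    have hb' : σ₁ b = b := h₁.apply_of_notMem b fun h => hdisj b h b (mem_cons_self) rfl
    have := mul_swap_eq_swap_mul (σ₁ * σ₂) a b
    rw [Perm.mul_apply, Perm.mul_apply, ha', ha, hb, hb'] at this
    exact this.symm
  refine ⟨?_, ?_, ?_⟩
  · calc Equiv.swap a b * σ₁ * σ₂ * (Equiv.swap a b * σ₁ * σ₂)
        = (Equiv.swap a b * (σ₁ * σ₂)) ^ 2 := by rw [sq]; simp only [mul_assoc]
      _ = Equiv.swap a b ^ 2 * (σ₁ * σ₂) ^ 2 := hswap.mul_pow 2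
      _ = 1 := by
        rw [sq, sq, swap_mul_self, hσ.symm.mul_mul_mul_comm, h₁.mul_self, h₂.mul_self, one_mul,
          one_mul]
  · have hτ_eq : Equiv.swap a b * σ₁ * σ₂ * (a :: u ++ b :: v).formPerm
        = σ₁ * (a :: u).formPerm * (σ₂ * (b :: v).formPerm) := by
      calc _ = Equiv.swap a b * (σ₁ * σ₂) * Equiv.swap a b *
              ((a :: u).formPerm * (b :: v).formPerm) := by
            rw [formPerm_cons_append_cons a b u v hl]; simp only [mul_assoc]
        _ = σ₁ * (σ₂ * (a :: u).formPerm) * (b :: v).formPerm := by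
            rw [hswap.eq, mul_assoc (σ₁ * σ₂), swap_mul_self, mul_one]; simp only [mul_assoc]
        _ = _ := by rw [hσc.eq]; simp only [mul_assoc]
    rw [hτ_eq, hτ.mul_pow, h₁.pow_mul_formPerm, h₂.pow_mul_formPerm, one_mul]
  · intro x hx
    simp only [mem_append, mem_cons, not_or] at hx
    rw [Perm.mul_apply, Perm.mul_apply, h₂.apply_of_notMem x (by simp [hx.2.1, hx.2.2]),
      h₁.apply_of_notMem x (by simp [hx.1.1, hx.1.2]), swap_apply_of_ne_of_ne hx.1.1 hx.2.1]

end IsInvolutiveFactor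

/-- For `p = [x₁, y₁, …, xₖ, yₖ]` the witness is `σ = (x₁ y₁) ⋯ (xₖ yₖ)`, and `σ * formPerm` is
the cycle on `a :: w ++ [y₁, …, yₖ]`. -/
theorem exists_isInvolutiveFactor_cons_append (a : α) (k : ℕ) :
    ∀ w p : List α, (a :: w ++ p).Nodup → p.length = 2 * k →
      ∃ σ, IsInvolutiveFactor (k + w.length + 1) (a :: w ++ p) σ ∧ ∀ x ∈ a :: w, σ x = x := by
  induction k with
  | zero =>
    intro w p hl hp
    rw [length_eq_zero_iff.mp hp, append_nil] at hl ⊢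
    exact ⟨1, by simpa using IsInvolutiveFactor.one hl, fun _ _ => rfl⟩
  | succ k ih =>
    rintro w (_ | ⟨x, _ | ⟨y, p⟩⟩) hl hp <;> simp only [length_cons, length_nil] at hp
    · omega
    · omega
    have hrot : a :: w ++ x :: y :: p ~r x :: y :: p ++ a :: w := isRotated_append
    have hl' : (y :: p ++ a :: w).Nodup := (hrot.nodup_iff.mp hl).of_cons
    have hrot' : a :: (w ++ [y]) ++ p ~r y :: p ++ a :: w := by
      simpa using isRotated_append (l := a :: w) (l' := y :: p)
    obtain ⟨σ, hσ, hfix⟩ := ih (w ++ [y]) p (hrot'.nodup_iff.mpr hl') (by omega)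
    rw [length_append, length_singleton, ← add_assoc, add_right_comm k] at hσ
    refine ⟨Equiv.swap x y * 1 * σ,
      ((IsInvolutiveFactor.singleton _ x).cons_append_cons
        (hσ.of_isRotated (hrot'.nodup_iff.mpr hl') hrot') rfl (hfix y (by simp))
        (hrot.nodup_iff.mp hl)).of_isRotated (hrot.nodup_iff.mp hl) hrot.symm,
      fun z hz => ?_⟩
    have hz' := (nodup_append.mp hl).2.2 z hz
    rw [mul_one, Perm.mul_apply, hfix z (by simp_all),
      swap_apply_of_ne_of_ne (hz' x (by simp)) (hz' y (by simp))]

/-- Short cycles are handled by `exists_isInvolutiveFactor_cons_append`; longer ones are cut by a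
transposition into a cycle of length `n - d` and a `d`-cycle that contains `a`. -/
theorem exists_isInvolutiveFactor_cons {d : ℕ} (hd : 2 ≤ d) (n : ℕ) :
    ∀ (a : α) (l : List α), (a :: l).Nodup → (a :: l).length = n → d ≤ n →
      ∃ σ, IsInvolutiveFactor d (a :: l) σ ∧ σ a = a := by
  induction n using Nat.strong_induction_on with
  | _ n ih =>
    intro a l hl hn hdn
    rw [length_cons] at hn
    by_cases hsmall : n < 2 * d
    · obtain ⟨w, p, rfl, hw⟩ := exists_eq_append_of_le_length (l := l) (k := 2 * d - n - 1)
        (by omega)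
      obtain ⟨σ, hσ, hfix⟩ := exists_isInvolutiveFactor_cons_append a (n - d) w p hl
        (by simp only [length_append] at hn; omega)
      rw [show n - d + w.length + 1 = d by omega] at hσ
      exact ⟨σ, hσ, hfix a mem_cons_self⟩
    · obtain ⟨_ | ⟨x, u⟩, _ | ⟨b, v⟩, rfl, hu⟩ :=
        exists_eq_append_of_le_length (l := l) (k := n - d) (by omega)
      all_goals simp only [length_nil, length_cons, length_append] at hu hn
      · omega
      · omega
      · omega
      have hrot : a :: (x :: u ++ b :: v) ~r x :: u ++ b :: (v ++ [a]) := by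
        simpa using isRotated_append (l := [a]) (l' := x :: u ++ b :: v)
      have hl' := hrot.nodup_iff.mp hl
      obtain ⟨σ, hσ, hσx⟩ := ih (n - d) (by omega) x u (nodup_append.mp hl').1
        (by simp only [length_cons]; omega) (by omega)
      have hcycle : IsInvolutiveFactor d (b :: (v ++ [a])) 1 := by
        simpa [show v.length + 1 + 1 = d by omega] using
          IsInvolutiveFactor.one (nodup_append.mp hl').2.1
      refine ⟨Equiv.swap x b * σ * 1,
        (hσ.cons_append_cons hcycle hσx rfl hl').of_isRotated hl' hrot.symm, ?_⟩
      have ha : a ∉ x :: u ++ b :: v := (nodup_cons.mp hl).1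
      simp only [mem_append, mem_cons, not_or] at ha
      rw [mul_one, Perm.mul_apply, hσ.apply_of_notMem a (by simp [ha.1.1, ha.1.2]),
        swap_apply_of_ne_of_ne ha.1.1 ha.2.1]

theorem exists_isInvolutiveFactor {d : ℕ} (hd : 2 ≤ d) {l : List α} (hl : l.Nodup)
    (hdl : d ≤ l.length) : ∃ σ, IsInvolutiveFactor d l σ := by
  obtain _ | ⟨a, l⟩ := l
  · simp only [length_nil] at hdl; omega
  · exact (exists_isInvolutiveFactor_cons hd _ a l hl rfl hdl).imp fun _ => And.left

theorem List.formPerm_finRange (n : ℕ) : (finRange n).formPerm = finRotate n := by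
  obtain _ | n := n
  · exact Subsingleton.elim _ _
  ext i
  have := formPerm_apply_getElem (finRange (n + 1)) (nodup_finRange _) i (by simpa using i.2)
  simp only [getElem_finRange, length_finRange, Fin.cast_mk, Fin.eta] at this
  rw [this, finRotate_apply]
  simp [Fin.val_add]

theorem finRotate_mul_self_ne_one {n : ℕ} (hn : 3 ≤ n) : finRotate n * finRotate n ≠ 1 := by
  intro h
  have hord : orderOf (finRotate n) = n := by
    rw [(isCycle_finRotate_of_le (by omega)).orderOf, support_finRotate_of_le (by omega),
      Finset.card_univ, Fintype.card_fin]
  have := Nat.le_of_dvd two_pos (hord ▸ orderOf_dvd_of_pow_eq_one ((sq _).trans h))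
  omega

theorem Equiv.Perm.exists_prime_dvd_le_card [Fintype α] {g : Perm α} (hg : g ≠ 1) {q : ℕ}
    (hq : g ^ q = 1) :
    ∃ r : ℕ, r.Prime ∧ r ∣ q ∧ r ≤ Fintype.card α := by
  have hr : (orderOf g).minFac.Prime := Nat.minFac_prime (by simpa using hg)
  have hdvd : (orderOf g).minFac ∣ orderOf g := Nat.minFac_dvd _
  refine ⟨_, hr, hdvd.trans (orderOf_dvd_of_pow_eq_one hq), hr.dvd_factorial.mp ?_⟩
  exact hdvd.trans (Fintype.card_perm (α := α) ▸ orderOf_dvd_card)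

theorem stmt_3_general (p q : ℕ) (hp : 3 ≤ p) :
    (∃ σ : Equiv.Perm (Fin p), σ * σ = 1 ∧ (σ * finRotate p) ^ q = 1) ↔
      ∃ d : ℕ, d.Prime ∧ d ∣ q ∧ d ≤ p := by
  constructor
  · rintro ⟨σ, hσ, hpow⟩
    have hne : σ * finRotate p ≠ 1 := by
      intro h
      have hρ : finRotate p = σ :=
        (eq_inv_of_mul_eq_one_right h).trans (inv_eq_of_mul_eq_one_right hσ)
      exact finRotate_mul_self_ne_one hp (hρ ▸ hσ)
    simpa using Perm.exists_prime_dvd_le_card hne hpow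
  · rintro ⟨d, hd, ⟨e, rfl⟩, hdp⟩
    obtain ⟨σ, hσ⟩ := exists_isInvolutiveFactor hd.two_le (nodup_finRange p) (by simpa using hdp)
    have hτ := hσ.pow_mul_formPerm
    rw [formPerm_finRange] at hτ
    exact ⟨σ, hσ.mul_self, by rw [pow_mul, hτ, one_pow]⟩

theorem stmt_3 (p q : ℕ) (hp : 3 ≤ p) (hq : 2 ≤ q) :
    (∃ σ : Equiv.Perm (Fin p), σ * σ = 1 ∧ (σ * finRotate p) ^ q = 1) ↔
      ∃ d : ℕ, d.Prime ∧ d ∣ q ∧ d ≤ p :=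
  stmt_3_general p q hp
end

section
/- Let p ≥ 3 and q ≥ 3 with 1/p + 1/q < 1/2. If q is prime and q > p, then there is no involution σ ∈ S_p with (σρ)^q = 1, where ρ = (1 2 … p). -/
theorem stmt_6 (p q : ℕ) (hp : 3 ≤ p) (hq : 3 ≤ q)
    (hpq : (1 : ℚ) / p + 1 / q < 1 / 2) (hqprime : q.Prime) (hgt : p < q) :
    ¬ ∃ σ : Equiv.Perm (Fin p), σ * σ = 1 ∧ (σ * finRotate p) ^ q = 1 := by
  rintro ⟨σ, hσ, hq1⟩
  have hdvd : orderOf (σ * finRotate p) ∣ q := orderOf_dvd_of_pow_eq_one hq1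
  have hdvd2 : orderOf (σ * finRotate p) ∣ Nat.factorial p := by
    have := orderOf_dvd_card (x := σ * finRotate p)
    rwa [Fintype.card_perm, Fintype.card_fin] at this
  have h1 : orderOf (σ * finRotate p) = 1 := by
    rcases (Nat.dvd_prime hqprime).mp hdvd with h | h
    · exact h
    · exfalso
      rw [h] at hdvd2
      exact absurd ((Nat.Prime.dvd_factorial hqprime).mp hdvd2) (by omega)
  have heq : σ * finRotate p = 1 := orderOf_eq_one_iff.mp h1
  have hrot : finRotate p = σ := by
    have : σ⁻¹ = σ := by
      have := congrArg (· * σ⁻¹) hσ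
      simpa [mul_assoc] using this.symm
    calc finRotate p = σ⁻¹ * (σ * finRotate p) := by group
    _ = σ⁻¹ := by rw [heq]; group
    _ = σ := this
  have h2 : finRotate p * finRotate p = 1 := by rw [hrot]; exact hσ
  obtain ⟨n, rfl⟩ : ∃ n, p = n + 3 := ⟨p - 3, by omega⟩
  have := congrArg (fun f => f (0 : Fin (n + 3))) h2
  simp only [Equiv.Perm.mul_apply, Equiv.Perm.one_apply] at this
  simp only [finRotate_succ_apply] at this
  have hval := congrArg Fin.val this
  simp [Fin.val_add, Fin.val_one, Nat.mod_eq_of_lt] at hval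
end

section
/- Let p ≥ 3, write p = am + r with 2 ≤ m ≤ p, a ≥ 1 and 0 ≤ r < m, and define σ ∈ S_p as the product of the disjoint transpositions (j(m−1)+1, p−(j−1)) for j = 1, …, a−1 together with the transpositions (p−a−2k, p−a−(2k−1)) for k = 0, …, r−1. Then σ is an involution and σρ has order m, where ρ = (1 2 … p). -/
/-!
Write `q = m - 1`, so that `p = a q + a + r` with `r ≤ q`, and number the points `0, …, p - 1`.
The transpositions are pairwise disjoint, so `σ` is an involution. Since `σρ i = σ (i + 1)`,
the orbits of `σρ` can be read off. For `j < a - 1` the points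
`j q, j q + 1, …, j q + q - 1, p - j - 1` form an `m`-cycle, closed by `σ (p - j) = j q`.
The last orbit runs through `(a - 1) q, …, a q - r`, then jumps by two through the `r`
transposed pairs up to `a q + r = p - a`, and returns to `(a - 1) q = σ (p - a + 1)`; the other
point of each of these pairs is fixed. Hence `(σρ) ^ m = 1`, while the orbit of `0` has exactly
`m` points.
-/

open Equiv Equiv.Perm Fin.NatCast

theorem Nat.ne_mul_of_lt_of_lt {j q x : ℕ} (h₁ : j * q < x) (h₂ : x < j * q + q) (k : ℕ) :
    x ≠ k * q := by
  rintro rfl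
  have := Nat.lt_of_mul_lt_mul_right h₁
  have : k * q < (j + 1) * q := by rwa [Nat.succ_mul]
  have := Nat.lt_of_mul_lt_mul_right this
  omega

theorem Nat.mul_add_le_mul_of_lt {j a : ℕ} (h : j < a) (q : ℕ) : j * q + q ≤ a * q := by
  simpa [Nat.succ_mul] using Nat.mul_le_mul_right q h

theorem Fin.natCast_inj_of_lt {p : ℕ} [NeZero p] {x y : ℕ} (hx : x < p) (hy : y < p) :
    (x : Fin p) = y ↔ x = y := by
  rw [Fin.ext_iff, val_cast_of_lt hx, val_cast_of_lt hy]

namespace Equiv.Perm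

variable {α : Type*}

theorem list_prod_apply_eq_self {l : List (Perm α)} {x : α} (h : ∀ g ∈ l, g x = x) :
    l.prod x = x := by
  induction l with
  | nil => rfl
  | cons g l ih =>
    rw [List.prod_cons, mul_apply, ih fun g' hg' => h g' (List.mem_cons_of_mem g hg'),
      h g List.mem_cons_self]

theorem list_prod_mul_self_eq_one {l : List (Perm α)} (hl : l.Pairwise Disjoint)
    (h : ∀ g ∈ l, g * g = 1) : l.prod * l.prod = 1 := by
  induction l with
  | nil => rfl
  | cons g l ih =>
    obtain ⟨hg, hl⟩ := List.pairwise_cons.mp hl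
    rw [List.prod_cons, (disjoint_prod_right l hg).commute.symm.mul_mul_mul_comm,
      h g List.mem_cons_self, ih hl fun g' hg' => h g' (List.mem_cons_of_mem g hg'), one_mul]

theorem list_prod_apply_of_swap_mem [DecidableEq α] [Fintype α] {l : List (Perm α)}
    (hl : l.Pairwise Disjoint) {x y : α} (hxy : x ≠ y) (h : swap x y ∈ l) :
    l.prod x = y ∧ l.prod y = x := by
  have hsupp : ∀ z ∈ ({x, y} : Finset α), z ∈ (swap x y).support := by simp [hxy]
  rw [← eq_on_support_mem_disjoint h hl x (hsupp x (by simp)), swap_apply_left,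
    ← eq_on_support_mem_disjoint h hl y (hsupp y (by simp)), swap_apply_right]
  exact ⟨rfl, rfl⟩

theorem disjoint_swap_swap_of_ne [DecidableEq α] {x y z t : α} (hxz : x ≠ z) (hxt : x ≠ t)
    (hyz : y ≠ z) (hyt : y ≠ t) : Disjoint (swap x y) (swap z t) := by
  intro
  grind

theorem pow_apply_of_chain (f : Perm α) (g : ℕ → α) {n : ℕ}
    (h : ∀ d < n, f (g d) = g (d + 1)) : (f ^ n) (g 0) = g n := by
  induction n with
  | zero => rfl
  | succ n ih => rw [pow_succ', mul_apply, ih fun d hd => h d (by omega), h n n.lt_succ_self]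

theorem pow_apply_pow_apply_of_pow_apply_eq_self (f : Perm α) {n : ℕ} {x : α}
    (h : (f ^ n) x = x) (d : ℕ) : (f ^ n) ((f ^ d) x) = (f ^ d) x := by
  rw [← mul_apply, pow_mul_comm, mul_apply, h]

end Equiv.Perm

namespace SwapRotation

/-- With `q = m - 1` and points numbered from `0`, the paper's transposition
`(j(m-1)+1, p-(j-1))` is `(j q, p - j)`. -/
def transpositions (p a q r : ℕ) [NeZero p] : List (Perm (Fin p)) :=
  (List.Ico 1 a).map (fun j => swap ((j * q : ℕ) : Fin p) ((p - j : ℕ) : Fin p)) ++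
    (List.range r).map fun k =>
      swap ((p - a - 2 * k - 1 : ℕ) : Fin p) ((p - a - 2 * k : ℕ) : Fin p)

def sigma (p a q r : ℕ) [NeZero p] : Perm (Fin p) := (transpositions p a q r).prod

def sigmaRho (p a q r : ℕ) [NeZero p] : Perm (Fin p) := sigma p a q r * finRotate p

variable {p a q r : ℕ} [NeZero p]

theorem pairwise_disjoint_transpositions (hq : 1 ≤ q) (ha : 1 ≤ a) (hr : r ≤ q)
    (hp : p = a * q + a + r) : (transpositions p a q r).Pairwise Disjoint := by
  have := Nat.le_mul_of_pos_left q ha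
  rw [transpositions, List.pairwise_append, List.pairwise_map, List.pairwise_map]
  refine ⟨(List.Ico.nodup _ _).pairwise_of_forall_ne fun j hj j' hj' hne => ?_,
    List.nodup_range.pairwise_of_forall_ne fun k hk k' hk' hne => ?_, ?_⟩
  · rw [List.Ico.mem] at hj hj'
    have := Nat.mul_add_le_mul_of_lt hj.2 q
    have := Nat.mul_add_le_mul_of_lt hj'.2 q
    have : j * q ≠ j' * q := fun h => hne (Nat.eq_of_mul_eq_mul_right hq h)
    apply disjoint_swap_swap_of_ne <;> rw [Ne, Fin.natCast_inj_of_lt] <;> omega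
  · rw [List.mem_range] at hk hk'
    apply disjoint_swap_swap_of_ne <;> rw [Ne, Fin.natCast_inj_of_lt] <;> omega
  · simp only [List.mem_map, List.Ico.mem, List.mem_range]
    rintro _ ⟨j, hj, rfl⟩ _ ⟨k, hk, rfl⟩
    have := Nat.mul_add_le_mul_of_lt hj.2 q
    apply disjoint_swap_swap_of_ne <;> rw [Ne, Fin.natCast_inj_of_lt] <;> omega

theorem sigma_mul_self (hq : 1 ≤ q) (ha : 1 ≤ a) (hr : r ≤ q) (hp : p = a * q + a + r) :
    sigma p a q r * sigma p a q r = 1 :=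
  list_prod_mul_self_eq_one (pairwise_disjoint_transpositions hq ha hr hp) fun g hg => by
    obtain ⟨_, _, rfl⟩ | ⟨_, _, rfl⟩ :=
      (List.mem_append.mp hg).imp List.mem_map.mp List.mem_map.mp
    all_goals exact swap_mul_self _ _

theorem sigma_apply_of_swap_mem (hq : 1 ≤ q) (ha : 1 ≤ a) (hr : r ≤ q)
    (hp : p = a * q + a + r) {x y : ℕ} (hx : x < p) (hy : y < p) (hxy : x ≠ y)
    (h : swap (x : Fin p) y ∈ transpositions p a q r) :
    sigma p a q r x = y ∧ sigma p a q r y = x :=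
  list_prod_apply_of_swap_mem (pairwise_disjoint_transpositions hq ha hr hp)
    (by rwa [Ne, Fin.natCast_inj_of_lt hx hy]) h

theorem sigma_apply_mul (hq : 1 ≤ q) (ha : 1 ≤ a) (hr : r ≤ q) (hp : p = a * q + a + r)
    {j : ℕ} (hj : 1 ≤ j) (hja : j < a) :
    sigma p a q r (j * q : ℕ) = (p - j : ℕ) ∧ sigma p a q r (p - j : ℕ) = (j * q : ℕ) := by
  have := Nat.mul_add_le_mul_of_lt hja q
  exact sigma_apply_of_swap_mem hq ha hr hp (by omega) (by omega) (by omega)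
    (List.mem_append_left _ (List.mem_map_of_mem (List.Ico.mem.mpr ⟨hj, hja⟩)))

theorem sigma_apply_sub_sub (hq : 1 ≤ q) (ha : 1 ≤ a) (hr : r ≤ q) (hp : p = a * q + a + r)
    {k : ℕ} (hk : k < r) :
    sigma p a q r (p - a - 2 * k - 1 : ℕ) = (p - a - 2 * k : ℕ) ∧
      sigma p a q r (p - a - 2 * k : ℕ) = (p - a - 2 * k - 1 : ℕ) := by
  have := Nat.le_mul_of_pos_left q ha
  exact sigma_apply_of_swap_mem hq ha hr hp (by omega) (by omega) (by omega)
    (List.mem_append_right _ (List.mem_map_of_mem (List.mem_range.mpr hk)))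

theorem sigma_apply_of_le (ha : 1 ≤ a) (hr : r ≤ q) (hp : p = a * q + a + r) {i : ℕ}
    (hi : i ≤ a * q - r) (hmul : ∀ j, 1 ≤ j → j < a → i ≠ j * q) :
    sigma p a q r i = i := by
  have := Nat.le_mul_of_pos_left q ha
  refine list_prod_apply_eq_self fun g hg => ?_
  obtain ⟨j, hj, rfl⟩ | ⟨k, hk, rfl⟩ :=
    (List.mem_append.mp hg).imp List.mem_map.mp List.mem_map.mp
  · rw [List.Ico.mem] at hj
    have := hmul j hj.1 hj.2
    have := Nat.mul_add_le_mul_of_lt hj.2 q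
    refine swap_apply_of_ne_of_ne ?_ ?_ <;> rw [Ne, Fin.natCast_inj_of_lt] <;> omega
  · rw [List.mem_range] at hk
    refine swap_apply_of_ne_of_ne ?_ ?_ <;> rw [Ne, Fin.natCast_inj_of_lt] <;> omega

theorem sigma_zero (hq : 1 ≤ q) (ha : 1 ≤ a) (hr : r ≤ q) (hp : p = a * q + a + r) :
    sigma p a q r 0 = 0 := by
  simpa using sigma_apply_of_le (i := 0) ha hr hp (Nat.zero_le _)
    fun j hj _ => (Nat.mul_pos hj hq).ne

theorem sigmaRho_natCast (i : ℕ) : sigmaRho p a q r i = sigma p a q r (i + 1 : ℕ) := by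
  rw [sigmaRho, mul_apply, finRotate_apply, Nat.cast_succ]

theorem sigmaRho_pow_mul_add (hq : 1 ≤ q) (ha : 1 ≤ a) (hr : r ≤ q) (hp : p = a * q + a + r)
    {j d : ℕ} (hj : j + 1 < a) (hd : d < q) :
    (sigmaRho p a q r ^ d) (j * q : ℕ) = (j * q + d : ℕ) := by
  have := Nat.mul_add_le_mul_of_lt hj q
  have := add_one_mul j q
  refine pow_apply_of_chain _ (fun e => ((j * q + e : ℕ) : Fin p)) fun e he => ?_
  rw [sigmaRho_natCast, sigma_apply_of_le ha hr hp (by omega)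
    fun _ _ _ => Nat.ne_mul_of_lt_of_lt (j := j) (by omega) (by omega) _]
  rfl

theorem sigmaRho_pow_mul (hq : 1 ≤ q) (ha : 1 ≤ a) (hr : r ≤ q) (hp : p = a * q + a + r)
    {j : ℕ} (hj : j + 1 < a) : (sigmaRho p a q r ^ q) (j * q : ℕ) = (p - (j + 1) : ℕ) := by
  obtain ⟨n, rfl⟩ : ∃ n, q = n + 1 := ⟨q - 1, by omega⟩
  rw [pow_succ', mul_apply, sigmaRho_pow_mul_add hq ha hr hp hj n.lt_succ_self,
    sigmaRho_natCast, show j * (n + 1) + n + 1 = (j + 1) * (n + 1) by ring]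
  exact (sigma_apply_mul hq ha hr hp (by omega) (by omega)).1

theorem sigmaRho_pow_succ_mul (hq : 1 ≤ q) (ha : 1 ≤ a) (hr : r ≤ q) (hp : p = a * q + a + r)
    {j : ℕ} (hj : j + 1 < a) : (sigmaRho p a q r ^ (q + 1)) (j * q : ℕ) = (j * q : ℕ) := by
  rw [pow_succ', mul_apply, sigmaRho_pow_mul hq ha hr hp hj, sigmaRho_natCast]
  rcases j with _ | j
  · rw [show p - (0 + 1) + 1 = p by omega, Fin.natCast_self, sigma_zero hq ha hr hp, zero_mul,
      Fin.natCast_zero]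
  · rw [show p - (j + 1 + 1) + 1 = p - (j + 1) by omega]
    exact (sigma_apply_mul hq ha hr hp (by omega) (by omega)).2

theorem sigmaRho_pow_sub_add (ha : 1 ≤ a) (hr : r ≤ q) (hp : p = a * q + a + r) {d : ℕ}
    (hd : d ≤ q - r) : (sigmaRho p a q r ^ d) (a * q - q : ℕ) = (a * q - q + d : ℕ) := by
  have := Nat.le_mul_of_pos_left q ha
  refine pow_apply_of_chain _ (fun e => ((a * q - q + e : ℕ) : Fin p)) fun e he => ?_
  rw [sigmaRho_natCast, sigma_apply_of_le ha hr hp (by omega) fun j _ hj => ?_]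
  · rfl
  · have := Nat.mul_add_le_mul_of_lt hj q
    omega

theorem sigmaRho_pow_sub_add_add (hq : 1 ≤ q) (ha : 1 ≤ a) (hr : r ≤ q)
    (hp : p = a * q + a + r) {e : ℕ} (he : e ≤ r) :
    (sigmaRho p a q r ^ (q - r + e)) (a * q - q : ℕ) = (a * q - r + 2 * e : ℕ) := by
  have := Nat.le_mul_of_pos_left q ha
  rw [add_comm, pow_add, mul_apply, sigmaRho_pow_sub_add ha hr hp le_rfl,
    show a * q - q + (q - r) = a * q - r + 2 * 0 by omega]
  refine pow_apply_of_chain _ (fun e => ((a * q - r + 2 * e : ℕ) : Fin p)) fun e he => ?_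
  have hC := (sigma_apply_sub_sub hq ha hr hp (k := r - 1 - e) (by omega)).1
  rwa [show p - a - 2 * (r - 1 - e) - 1 = a * q - r + 2 * e + 1 by omega,
    show p - a - 2 * (r - 1 - e) = a * q - r + 2 * (e + 1) by omega, ← sigmaRho_natCast] at hC

theorem sigmaRho_pow_succ_sub (hq : 1 ≤ q) (ha : 1 ≤ a) (hr : r ≤ q)
    (hp : p = a * q + a + r) :
    (sigmaRho p a q r ^ (q + 1)) (a * q - q : ℕ) = (a * q - q : ℕ) := by
  have h := sigmaRho_pow_sub_add_add hq ha hr hp le_rfl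
  rw [Nat.sub_add_cancel hr] at h
  rw [pow_succ', mul_apply, h, sigmaRho_natCast]
  rcases ha.eq_or_lt with rfl | ha₂
  · rw [show 1 * q - r + 2 * r + 1 = p by omega, Fin.natCast_self, sigma_zero hq le_rfl hr hp,
      one_mul, Nat.sub_self, Fin.natCast_zero]
  · have := Nat.le_mul_of_pos_left q ha
    rw [show a * q - r + 2 * r + 1 = p - (a - 1) by omega, ← Nat.sub_one_mul]
    exact (sigma_apply_mul hq ha hr hp (by omega) (by omega)).2

theorem sigmaRho_sub_sub (hq : 1 ≤ q) (ha : 1 ≤ a) (hr : r ≤ q) (hp : p = a * q + a + r)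
    {k : ℕ} (hk : k < r) :
    sigmaRho p a q r (p - a - 2 * k - 1 : ℕ) = (p - a - 2 * k - 1 : ℕ) := by
  have := Nat.le_mul_of_pos_left q ha
  rw [sigmaRho_natCast, show p - a - 2 * k - 1 + 1 = p - a - 2 * k by omega]
  exact (sigma_apply_sub_sub hq ha hr hp hk).2

theorem sigmaRho_pow_succ (hq : 1 ≤ q) (ha : 1 ≤ a) (hr : r ≤ q) (hp : p = a * q + a + r) :
    sigmaRho p a q r ^ (q + 1) = 1 := by
  have := Nat.le_mul_of_pos_left q ha
  ext1 x
  obtain ⟨i, hi, rfl⟩ : ∃ i < p, (i : Fin p) = x := ⟨x, x.isLt, Fin.cast_val_eq_self x⟩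
  rw [one_apply]
  rcases lt_or_ge i (a * q - q) with h₁ | h₁
  · have hj : i / q + 1 < a := by
      have := (Nat.div_lt_iff_lt_mul hq).mpr (h₁.trans_eq (Nat.sub_one_mul a q).symm)
      omega
    rw [← Nat.div_add_mod' i q, ← sigmaRho_pow_mul_add hq ha hr hp hj (Nat.mod_lt i hq)]
    exact pow_apply_pow_apply_of_pow_apply_eq_self _ (sigmaRho_pow_succ_mul hq ha hr hp hj) _
  rcases le_or_gt i (a * q - r) with h₂ | h₂
  · rw [show i = a * q - q + (i - (a * q - q)) by omega,
      ← sigmaRho_pow_sub_add ha hr hp (by omega)]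
    exact pow_apply_pow_apply_of_pow_apply_eq_self _ (sigmaRho_pow_succ_sub hq ha hr hp) _
  rcases le_or_gt i (a * q + r) with h₃ | h₃
  · obtain ⟨k, hk | hk⟩ := Nat.even_or_odd' (a * q + r - i)
    · rw [show i = a * q - r + 2 * (r - k) by omega,
        ← sigmaRho_pow_sub_add_add hq ha hr hp (by omega)]
      exact pow_apply_pow_apply_of_pow_apply_eq_self _ (sigmaRho_pow_succ_sub hq ha hr hp) _
    · rw [show i = p - a - 2 * k - 1 by omega]
      exact pow_apply_eq_self_of_apply_eq_self (sigmaRho_sub_sub hq ha hr hp (by omega)) _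
  · have hj : p - i - 1 + 1 < a := by omega
    rw [show i = p - (p - i - 1 + 1) by omega, ← sigmaRho_pow_mul hq ha hr hp hj]
    exact pow_apply_pow_apply_of_pow_apply_eq_self _ (sigmaRho_pow_succ_mul hq ha hr hp hj) _

theorem sigmaRho_pow_apply_zero_ne (hq : 1 ≤ q) (ha : 1 ≤ a) (hr : r ≤ q)
    (hp : p = a * q + a + r) {d : ℕ} (hd : 0 < d) (hdq : d ≤ q) :
    (sigmaRho p a q r ^ d) 0 ≠ 0 := by
  have hne : ∀ i, 0 < i → i < p → (i : Fin p) ≠ 0 := fun i hi hip => by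
    rw [← Fin.natCast_zero, Ne, Fin.natCast_inj_of_lt hip (by omega)]
    omega
  rcases ha.eq_or_lt with rfl | ha₂
  · rcases le_or_gt d (q - r) with h | h
    · have h₀ := sigmaRho_pow_sub_add le_rfl hr hp h
      rw [one_mul, Nat.sub_self, zero_add, Fin.natCast_zero] at h₀
      exact h₀ ▸ hne _ hd (by omega)
    · have h₀ := sigmaRho_pow_sub_add_add hq le_rfl hr hp (e := d - (q - r)) (by omega)
      rw [Nat.add_sub_cancel' h.le, one_mul, Nat.sub_self, Fin.natCast_zero] at h₀
      exact h₀ ▸ hne _ (by omega) (by omega)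
  · have := Nat.le_mul_of_pos_left q ha
    rcases hdq.lt_or_eq with h | rfl
    · have h₀ := sigmaRho_pow_mul_add hq ha hr hp (j := 0) (by omega) h
      rw [zero_mul, zero_add, Fin.natCast_zero] at h₀
      exact h₀ ▸ hne _ hd (by omega)
    · have h₀ := sigmaRho_pow_mul hq ha hr hp (j := 0) (by omega)
      rw [zero_mul, Fin.natCast_zero] at h₀
      exact h₀ ▸ hne _ (by omega) (by omega)

theorem orderOf_sigmaRho (hq : 1 ≤ q) (ha : 1 ≤ a) (hr : r ≤ q) (hp : p = a * q + a + r) :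
    orderOf (sigmaRho p a q r) = q + 1 :=
  (orderOf_eq_iff q.succ_pos).mpr ⟨sigmaRho_pow_succ hq ha hr hp, fun d hdq hd h =>
    sigmaRho_pow_apply_zero_ne hq ha hr hp hd (by omega) (by rw [h, one_apply])⟩

end SwapRotation

theorem stmt_8_general (p a m r : ℕ) [NeZero p] (hm : 2 ≤ m)
    (ha : 1 ≤ a) (hr : r < m) (hdecomp : p = a * m + r)
    (σ : Equiv.Perm (Fin p))
    (hσdef : σ =
      (((List.Ico 1 a).map fun j =>
        Equiv.swap (Fin.ofNat p (j * (m - 1) + 1 - 1)) (Fin.ofNat p (p - (j - 1) - 1))).prod) *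
      (((List.range r).map fun k =>
        Equiv.swap (Fin.ofNat p (p - a - 2 * k - 1)) (Fin.ofNat p (p - a - 2 * k + 1 - 1))).prod)) :
    σ * σ = 1 ∧ orderOf (σ * finRotate p) = m := by
  obtain ⟨q, rfl⟩ : ∃ q, m = q + 1 := ⟨m - 1, by omega⟩
  have hp : p = a * q + a + r := by rw [hdecomp, mul_add_one]
  have hσ : σ = SwapRotation.sigma p a q r := by
    rw [hσdef, SwapRotation.sigma, SwapRotation.transpositions, List.prod_append]
    simp only [Fin.ofNat_eq_cast, Nat.add_sub_cancel]
    congr 2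
    refine List.map_congr_left fun j hj => ?_
    rw [show p - (j - 1) - 1 = p - j by have := (List.Ico.mem.mp hj).1; omega]
  subst hσ
  exact ⟨SwapRotation.sigma_mul_self (by omega) ha (by omega) hp,
    SwapRotation.orderOf_sigmaRho (by omega) ha (by omega) hp⟩

theorem stmt_8 (p a m r : ℕ) [NeZero p] (hp : 3 ≤ p) (hm : 2 ≤ m) (hmp : m ≤ p)
    (ha : 1 ≤ a) (hr : r < m) (hdecomp : p = a * m + r)
    (σ : Equiv.Perm (Fin p))
    (hσdef : σ =
      (((List.Ico 1 a).map fun j =>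
        Equiv.swap (Fin.ofNat p (j * (m - 1) + 1 - 1)) (Fin.ofNat p (p - (j - 1) - 1))).prod) *
      (((List.range r).map fun k =>
        Equiv.swap (Fin.ofNat p (p - a - 2 * k - 1)) (Fin.ofNat p (p - a - 2 * k + 1 - 1))).prod)) :
    σ * σ = 1 ∧ orderOf (σ * finRotate p) = m :=
  stmt_8_general p a m r hm ha hr hdecomp σ hσdef
end
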